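/- Let H = (f, φ; g, ψ) with entries in L²(𝕋) and suppose R_H is bounded on L²(𝕋). Let V be the conjugation on L²(𝕋) defined by (Vx)(z) = z̄·conj(x(z)). Then R_H is complex symmetric with respect to V, i.e. V R_H V = R_H*, if and only if f = ψ. -/

import Mathlib

open MeasureTheory AddCircle Filter Topology
open scoped ENNReal

noncomputable section

namespace GSIO

instance : Fact (0 < 2 * Real.pi) := ⟨by positivity⟩

/-- The unit circle, realized as `ℝ / 2πℤ`. -/
abbrev 𝕋 : Type := AddCircle (2 * Real.pi)

/-- Normalized Lebesgue (Haar) measure on the circle. -/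
abbrev μ : Measure 𝕋 := @haarAddCircle (2 * Real.pi) _

/-- `L²(𝕋)`. -/
abbrev L2 : Type := Lp ℂ 2 μ

/-- The embedding `𝕋 ⊆ ℂ`, `t ↦ e^{it}`. -/
def e : C(𝕋, ℂ) := ⟨fun t => (toCircle t : ℂ), continuous_induced_dom.comp continuous_toCircle⟩

/-- The Hardy space `H²`: the closed linear span of `{zⁿ : n ≥ 0}` in `L²`. -/
def H2 : Submodule ℂ L2 :=
  (Submodule.span ℂ (Set.range fun n : ℕ => (fourierLp 2 (n : ℤ) : L2))).topologicalClosure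

instance : CompleteSpace H2 :=
  (Submodule.isClosed_topologicalClosure _).completeSpace_coe

/-- The Riesz projection `P₊ : L² → H² ⊆ L²`. -/
def Pplus : L2 →L[ℂ] L2 := (H2.subtypeL).comp H2.orthogonalProjectionOnto

/-- `P₋ = I - P₊`. -/
def Pminus : L2 →L[ℂ] L2 := ContinuousLinearMap.id ℂ L2 - Pplus

/-- The GSIO defining relation `R x = P₊(f·P₊x) + P₋(g·P₊x) + P₊(φ·P₋x) + P₋(ψ·P₋x)`
at a point `x ∈ L²` (including the requirement that the four products lie in `L²`). -/
def gsioEq (R : L2 → L2) (f g φ ψ : 𝕋 → ℂ) (x : L2) : Prop :=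
  ∃ (h₁ : MemLp (f * ⇑(Pplus x)) 2 μ) (h₂ : MemLp (g * ⇑(Pplus x)) 2 μ)
    (h₃ : MemLp (φ * ⇑(Pminus x)) 2 μ) (h₄ : MemLp (ψ * ⇑(Pminus x)) 2 μ),
    R x = Pplus (h₁.toLp _) + Pminus (h₂.toLp _) + Pplus (h₃.toLp _) + Pminus (h₄.toLp _)

/-- `R` is the (bounded) generalized singular integral operator with
symbol matrix `(f, φ; g, ψ)`. -/
def IsGSIO (R : L2 →L[ℂ] L2) (f g φ ψ : 𝕋 → ℂ) : Prop := ∀ x : L2, gsioEq (⇑R) f g φ ψ x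

/-- Normalized reproducing kernel `k_z` of `H²`, as an element of `L²`. -/
def kern (z : ℂ) : L2 :=
  (Real.sqrt (1 - ‖z‖ ^ 2) : ℂ) • ∑' n : ℕ, (starRingEnd ℂ z) ^ n • (fourierLp 2 (n : ℤ) : L2)

/-- The unit vector `z̄k̄_z : w ↦ w̄ ⬝ conj (k_z w)` of `(H²)^⊥`, as an element of `L²`. -/
def kbar (z : ℂ) : L2 :=
  (Real.sqrt (1 - ‖z‖ ^ 2) : ℂ) • ∑' n : ℕ, z ^ n • (fourierLp 2 (-(n + 1) : ℤ) : L2)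

/-- `L∞(𝕋)`: essentially bounded (a.e. strongly measurable) functions. -/
def Linf : Set (𝕋 → ℂ) := {h | MemLp h ∞ μ}

/-- `C(𝕋)`: functions (a.e. equal to) continuous functions. -/
def CT : Set (𝕋 → ℂ) := {h | ∃ c : 𝕋 → ℂ, Continuous c ∧ h =ᵐ[μ] c}

/-- `H∞ = H² ∩ L∞`. -/
def Hinf : Set (𝕋 → ℂ) := {h | ∃ h2 : MemLp h 2 μ, h2.toLp h ∈ H2 ∧ MemLp h ∞ μ}

/-- `H∞ + C(𝕋)`. -/
def HinfC : Set (𝕋 → ℂ) := {h | ∃ a ∈ Hinf, ∃ c ∈ CT, h =ᵐ[μ] a + c}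

/-- The quasicontinuous functions `QC = (H∞ + C) ∩ conj (H∞ + C)`. -/
def QC : Set (𝕋 → ℂ) := {h | h ∈ HinfC ∧ star h ∈ HinfC}

/-- The set of GSIOs with all four symbols in `S`. -/
def gsioSet (S : Set (𝕋 → ℂ)) : Set (L2 →L[ℂ] L2) :=
  {R | ∃ f g φ ψ : 𝕋 → ℂ, f ∈ S ∧ g ∈ S ∧ φ ∈ S ∧ ψ ∈ S ∧ IsGSIO R f g φ ψ}

/-- The C*-algebra `𝔑_S` generated by the GSIOs with symbols in `S`. -/
def NAlg (S : Set (𝕋 → ℂ)) : StarSubalgebra ℂ (L2 →L[ℂ] L2) :=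
  (StarAlgebra.adjoin ℂ (gsioSet S)).topologicalClosure

/-- Generators `R_{H₁} R_{H₂} - R_K` of the semicommutator ideal. -/
def semiGen (S : Set (𝕋 → ℂ)) : Set (L2 →L[ℂ] L2) :=
  {T | ∃ f₁ g₁ φ₁ ψ₁ f₂ g₂ φ₂ ψ₂ g φ : 𝕋 → ℂ,
      f₁ ∈ S ∧ g₁ ∈ S ∧ φ₁ ∈ S ∧ ψ₁ ∈ S ∧ f₂ ∈ S ∧ g₂ ∈ S ∧ φ₂ ∈ S ∧ ψ₂ ∈ S ∧
      g ∈ S ∧ φ ∈ S ∧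
      ∃ R₁ R₂ RK : L2 →L[ℂ] L2, IsGSIO R₁ f₁ g₁ φ₁ ψ₁ ∧ IsGSIO R₂ f₂ g₂ φ₂ ψ₂ ∧
        IsGSIO RK (f₁ * f₂) g φ (ψ₁ * ψ₂) ∧ T = R₁ * R₂ - RK}

/-- The closed two-sided ideal `𝔖𝔑_S` of `𝔑_S` generated by the semicommutators. -/
def SemiIdeal (S : Set (𝕋 → ℂ)) : Set (L2 →L[ℂ] L2) :=
  closure (AddSubgroup.closure
    {T | ∃ a b t : L2 →L[ℂ] L2, a ∈ NAlg S ∧ b ∈ NAlg S ∧ t ∈ semiGen S ∧ T = a * t * b} :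
      Set (L2 →L[ℂ] L2))

/-- Fredholm: closed range and finite-dimensional kernel and cokernel. -/
def IsFredholm (T : L2 →L[ℂ] L2) : Prop :=
  FiniteDimensional ℂ (LinearMap.ker (T : L2 →ₗ[ℂ] L2)) ∧
  FiniteDimensional ℂ (L2 ⧸ LinearMap.range (T : L2 →ₗ[ℂ] L2)) ∧
  IsClosed (LinearMap.range (T : L2 →ₗ[ℂ] L2) : Set L2)

/-- Fredholm index `ind T = dim ker T - dim ker T*`. -/
def ind (T : L2 →L[ℂ] L2) : ℤ :=
  (Module.finrank ℂ (LinearMap.ker (T : L2 →ₗ[ℂ] L2)) : ℤ) -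
    (Module.finrank ℂ (LinearMap.ker (ContinuousLinearMap.adjoint T : L2 →ₗ[ℂ] L2)) : ℤ)

/-- Essential spectrum (spectrum in the Calkin algebra, via Atkinson's theorem). -/
def essSpectrum (T : L2 →L[ℂ] L2) : Set ℂ := {z | ¬ IsFredholm (T - z • 1)}

/-- Essential norm: distance to the compact operators. -/
def essNorm (T : L2 →L[ℂ] L2) : ℝ :=
  sInf ((fun K => ‖T + K‖) '' {K : L2 →L[ℂ] L2 | IsCompactOperator K})

/-- Essential range of a measurable function. -/
def essRange (f : 𝕋 → ℂ) : Set ℂ := {c | ∀ ε > 0, μ {t | dist (f t) c < ε} ≠ 0}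

/-- `a` has winding number `w` about the origin, via a continuous argument lift. -/
def HasWindingNumber (a : C(𝕋, ℂ)) (w : ℤ) : Prop :=
  ∃ θ : ℝ → ℝ, ContinuousOn θ (Set.Icc 0 (2 * Real.pi)) ∧
    (∀ t ∈ Set.Icc 0 (2 * Real.pi),
      a (t : 𝕋) = (‖a (t : 𝕋)‖ : ℂ) * Complex.exp (θ t * Complex.I)) ∧
    θ (2 * Real.pi) - θ 0 = 2 * Real.pi * w

/-- The constant function `1` in `L²`. -/
def one2 : L2 := MemLp.toLp (fun _ => (1 : ℂ)) (memLp_const 1)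

/-- The rank-one operator `1 ⊗ 1 : x ↦ ⟨x,1⟩·1`. -/
def oneProj : L2 →L[ℂ] L2 := (innerSL ℂ one2).smulRight one2

/-- The Hilbert transform `ℍ = P₊ - P₋ - 1⊗1`. -/
def hilbertT : L2 →L[ℂ] L2 := Pplus - Pminus - oneProj

/-- `BMO(𝕋) = L∞ + ℍ L∞`, as a subset of `L²`. -/
def BMO2 : Set L2 := {x | ∃ a b : L2, ⇑a ∈ Linf ∧ ⇑b ∈ Linf ∧ x = a + hilbertT b}

/-- `⋂_{p ≥ 1} L^p(𝕋)`. -/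
def Lfin : Set (𝕋 → ℂ) := {h | ∀ p : ℝ, 1 ≤ p → MemLp h (ENNReal.ofReal p) μ}

/-- The GSIO relation for a map defined on functions (rather than on `L²`). -/
def gsioEqF (R : (𝕋 → ℂ) → (𝕋 → ℂ)) (f g φ ψ : 𝕋 → ℂ) (x : 𝕋 → ℂ) : Prop :=
  ∃ (hx : MemLp x 2 μ)
    (h₁ : MemLp (f * ⇑(Pplus (hx.toLp x))) 2 μ) (h₂ : MemLp (g * ⇑(Pplus (hx.toLp x))) 2 μ)
    (h₃ : MemLp (φ * ⇑(Pminus (hx.toLp x))) 2 μ) (h₄ : MemLp (ψ * ⇑(Pminus (hx.toLp x))) 2 μ),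
    R x =ᵐ[μ] ⇑(Pplus (h₁.toLp _) + Pminus (h₂.toLp _) + Pplus (h₃.toLp _) + Pminus (h₄.toLp _))

/-- Distance in `L∞` from a function to `H∞`. -/
def distHinfF (a : 𝕋 → ℂ) : ℝ :=
  sInf {r : ℝ | ∃ h ∈ Hinf, r = (eLpNorm (a - h) ∞ μ).toReal}

end GSIO

namespace GSIO

/-- The radial-limit function of `T` along the reproducing kernels `k_{rξ}` is `f`:
`lim_{r→1⁻} ⟨T k_{rξ}, k_{rξ}⟩ = f ξ` for a.e. `ξ` (inner products in the Mathlib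
convention, conjugate-linear in the first variable). -/
def symbPlus (T : L2 → L2) (f : 𝕋 → ℂ) : Prop :=
  ∀ᵐ ξ ∂μ, Tendsto
    (fun r : ℝ => (inner ℂ (kern ((r : ℂ) * e ξ)) (T (kern ((r : ℂ) * e ξ))) : ℂ))
    (𝓝[<] (1 : ℝ)) (𝓝 (f ξ))

/-- The radial-limit function of `T` along the vectors `z̄k̄_{rξ}` is `ψ`:
`lim_{r→1⁻} ⟨T z̄k̄_{rξ}, z̄k̄_{rξ}⟩ = ψ ξ` for a.e. `ξ`. -/
def symbMinus (T : L2 → L2) (ψ : 𝕋 → ℂ) : Prop :=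
  ∀ᵐ ξ ∂μ, Tendsto
    (fun r : ℝ => (inner ℂ (kbar ((r : ℂ) * e ξ)) (T (kbar ((r : ℂ) * e ξ))) : ℂ))
    (𝓝[<] (1 : ℝ)) (𝓝 (ψ ξ))

/-- `ρ(T) = (f, ψ)`: the pair of radial-limit symbol functions of `T`, in `L∞ ⊕ L∞`. -/
def HasSymbol (T : L2 →L[ℂ] L2) (f ψ : 𝕋 → ℂ) : Prop :=
  f ∈ Linf ∧ ψ ∈ Linf ∧ symbPlus (⇑T) f ∧ symbMinus (⇑T) ψ

end GSIO

namespace GSIO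

/-- The conjugation `V` at the level of functions: `(V x)(z) = z̄ ⬝ conj (x z)`. -/
def VF (x : 𝕋 → ℂ) : 𝕋 → ℂ := star (⇑e * x)

/-!
`V` exchanges `H²` and its orthogonal complement (it sends `zᵏ` to `z^(-k-1)`), so
`V P± = P∓ V`; and since `|z| = 1` on `𝕋`, `⟪u · V a, V b⟫ = ⟪u · b, a⟫` for every symbol `u`.
Hence `⟪R_H (V x), V y⟫ = ⟪R_H' y, x⟫` for the transposed symbol `H' = (ψ, φ; g, f)`, which is
`⟪R_H y, x⟫` when `f = ψ`. Conversely, testing this identity on `x = zⁿ`, `y = zᵐ` shows that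
`f` and `ψ` have the same Fourier coefficients.
-/

open scoped InnerProductSpace ComplexConjugate

theorem conj_comp_comp_conj_eq_adjoint_iff {E : Type*} [NormedAddCommGroup E]
    [InnerProductSpace ℂ E] [CompleteSpace E] {J : E → E}
    (hJ : ∀ a b, ⟪a, J b⟫_ℂ = ⟪b, J a⟫_ℂ) (T : E →L[ℂ] E) :
    (∀ x, J (T (J x)) = T.adjoint x) ↔ ∀ x y, ⟪T (J x), J y⟫_ℂ = ⟪T y, x⟫_ℂ := by
  constructor
  · intro h x y
    rw [← hJ, h, ContinuousLinearMap.adjoint_inner_right]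
  · intro h x
    refine ext_inner_left ℂ fun y => ?_
    rw [hJ, h, ContinuousLinearMap.adjoint_inner_right]

theorem e_eq_fourier_one (t : 𝕋) : e t = fourier 1 t := by
  rw [fourier_apply, one_zsmul]
  rfl

theorem norm_e (t : 𝕋) : ‖e t‖ = 1 :=
  Circle.norm_coe _

theorem e_mul_conj (t : 𝕋) : e t * conj (e t) = 1 := by
  rw [Complex.mul_conj, Complex.normSq_eq_norm_sq, norm_e, one_pow, Complex.ofReal_one]

theorem memLp_VF {u : 𝕋 → ℂ} (hu : MemLp u 2 μ) : MemLp (VF u) 2 μ :=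
  (hu.mul (memLp_top_of_bound e.continuous.aestronglyMeasurable 1
    (Eventually.of_forall fun t => (norm_e t).le))).star

def V (x : L2) : L2 := (memLp_VF (Lp.memLp x)).toLp (VF x)

theorem coeFn_V (x : L2) : ⇑(V x) =ᵐ[μ] VF x :=
  MemLp.coeFn_toLp _

theorem inner_V_comm (a b : L2) : ⟪a, V b⟫_ℂ = ⟪b, V a⟫_ℂ := by
  rw [L2.inner_def, L2.inner_def]
  refine integral_congr_ae ?_
  filter_upwards [coeFn_V a, coeFn_V b] with t ha hb
  simp only [ha, hb, VF, Pi.star_apply, Pi.mul_apply, RCLike.inner_apply', RCLike.star_def,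
    map_mul]
  ring

theorem V_zero : V 0 = 0 :=
  ext_inner_left ℂ fun a => by rw [inner_V_comm, inner_zero_left, inner_zero_right]

theorem V_fourierLp (k : ℤ) : V (fourierLp 2 k) = fourierLp 2 (-(k + 1)) := by
  refine Lp.ext ?_
  filter_upwards [coeFn_V (fourierLp 2 k), coeFn_fourierLp 2 k, coeFn_fourierLp 2 (-(k + 1))]
    with t hV hk hk'
  rw [hV, hk', VF, Pi.star_apply, Pi.mul_apply, hk, show -(k + 1) = -(1 + k) by ring, fourier_neg,
    fourier_add, RCLike.star_def, e_eq_fourier_one]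

theorem ext_fourierLp {x y : L2}
    (h : ∀ k : ℤ, ⟪(fourierLp 2 k : L2), x⟫_ℂ = ⟪(fourierLp 2 k : L2), y⟫_ℂ) : x = y :=
  fourierBasis.repr.injective <| lp.ext <| funext fun k => by
    simpa only [HilbertBasis.repr_apply_apply, coe_fourierBasis] using h k

theorem fourierLp_mem_H2 (n : ℕ) : (fourierLp 2 (n : ℤ) : L2) ∈ H2 :=
  Submodule.le_topologicalClosure _ (Submodule.subset_span ⟨n, rfl⟩)

theorem fourierLp_neg_mem_orthogonal_H2 (n : ℕ) :
    (fourierLp 2 (-(n + 1) : ℤ) : L2) ∈ H2ᗮ := by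
  have hspan : Submodule.span ℂ (Set.range fun m : ℕ => (fourierLp 2 (m : ℤ) : L2)) ≤
      (ℂ ∙ (fourierLp 2 (-(n + 1) : ℤ) : L2))ᗮ := by
    rw [Submodule.span_le]
    rintro _ ⟨m, rfl⟩
    exact Submodule.mem_orthogonal_singleton_iff_inner_left.2
      ((orthonormal_fourier (T := 2 * Real.pi)).2 (by omega))
  rw [H2, Submodule.orthogonal_closure, Submodule.mem_orthogonal']
  exact fun u hu => Submodule.mem_orthogonal_singleton_iff_inner_right.1 (hspan hu)

theorem isSelfAdjoint_Pplus : IsSelfAdjoint Pplus :=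
  isSelfAdjoint_starProjection H2

theorem isSelfAdjoint_Pminus : IsSelfAdjoint Pminus :=
  (IsSelfAdjoint.one (R := L2 →L[ℂ] L2)).sub isSelfAdjoint_Pplus

theorem Pminus_apply (x : L2) : Pminus x = x - Pplus x :=
  rfl

theorem inner_Pplus_left (a b : L2) : ⟪Pplus a, b⟫_ℂ = ⟪a, Pplus b⟫_ℂ :=
  isSelfAdjoint_Pplus.isSymmetric a b

theorem inner_Pminus_left (a b : L2) : ⟪Pminus a, b⟫_ℂ = ⟪a, Pminus b⟫_ℂ :=
  isSelfAdjoint_Pminus.isSymmetric a b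

theorem Pplus_fourierLp_natCast (n : ℕ) : Pplus (fourierLp 2 (n : ℤ)) = fourierLp 2 (n : ℤ) :=
  Submodule.starProjection_eq_self_iff.2 (fourierLp_mem_H2 n)

theorem Pminus_fourierLp_natCast (n : ℕ) : Pminus (fourierLp 2 (n : ℤ)) = 0 := by
  rw [Pminus_apply, Pplus_fourierLp_natCast, sub_self]

theorem Pplus_fourierLp_neg (n : ℕ) : Pplus (fourierLp 2 (-(n + 1) : ℤ)) = 0 :=
  (Submodule.starProjection_apply_eq_zero_iff H2).2 (fourierLp_neg_mem_orthogonal_H2 n)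

theorem Pminus_fourierLp_neg (n : ℕ) :
    Pminus (fourierLp 2 (-(n + 1) : ℤ)) = fourierLp 2 (-(n + 1) : ℤ) := by
  rw [Pminus_apply, Pplus_fourierLp_neg, sub_zero]

theorem apply_V_eq_V_apply {P Q : L2 →L[ℂ] L2} (hP : IsSelfAdjoint P) (hQ : IsSelfAdjoint Q)
    (h : ∀ k : ℤ, V (P (fourierLp 2 k)) = Q (V (fourierLp 2 k))) (x : L2) :
    P (V x) = V (Q x) := by
  refine ext_fourierLp fun k => ?_
  calc ⟪(fourierLp 2 k : L2), P (V x)⟫_ℂ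
      = ⟪P (fourierLp 2 k), V x⟫_ℂ := (hP.isSymmetric _ _).symm
    _ = ⟪x, Q (V (fourierLp 2 k))⟫_ℂ := by rw [inner_V_comm, h]
    _ = ⟪(fourierLp 2 k : L2), V (Q x)⟫_ℂ := (hQ.isSymmetric _ _).symm.trans (inner_V_comm _ _)

theorem V_fourierLp_neg (n : ℕ) : V (fourierLp 2 (-(n + 1) : ℤ)) = fourierLp 2 (n : ℤ) := by
  rw [V_fourierLp]
  congr 1
  ring

theorem Pplus_V (x : L2) : Pplus (V x) = V (Pminus x) := by
  refine apply_V_eq_V_apply isSelfAdjoint_Pplus isSelfAdjoint_Pminus (fun k => ?_) x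
  rcases k with n | n
  · rw [Int.ofNat_eq_natCast, Pplus_fourierLp_natCast, V_fourierLp, Pminus_fourierLp_neg]
  · rw [Int.negSucc_eq, Pplus_fourierLp_neg, V_fourierLp_neg, Pminus_fourierLp_natCast, V_zero]

theorem Pminus_V (x : L2) : Pminus (V x) = V (Pplus x) := by
  refine apply_V_eq_V_apply isSelfAdjoint_Pminus isSelfAdjoint_Pplus (fun k => ?_) x
  rcases k with n | n
  · rw [Int.ofNat_eq_natCast, Pminus_fourierLp_natCast, V_fourierLp, Pplus_fourierLp_neg, V_zero]
  · rw [Int.negSucc_eq, Pminus_fourierLp_neg, V_fourierLp_neg, Pplus_fourierLp_natCast]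

/-- `⟪u • a, b⟫`, written as an integral so that it makes sense without `u * a ∈ L²`. -/
def mulInner (u : 𝕋 → ℂ) (a b : L2) : ℂ :=
  ∫ t, conj (u t * a t) * b t ∂μ

theorem inner_toLp_mul {u : 𝕋 → ℂ} {a : L2} (h : MemLp (u * ⇑a) 2 μ) (b : L2) :
    ⟪h.toLp (u * ⇑a), b⟫_ℂ = mulInner u a b := by
  rw [L2.inner_def]
  refine integral_congr_ae ?_
  filter_upwards [h.coeFn_toLp] with t ht
  rw [ht, RCLike.inner_apply', Pi.mul_apply]

theorem mulInner_congr {u v : 𝕋 → ℂ} (h : u =ᵐ[μ] v) (a b : L2) :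
    mulInner u a b = mulInner v a b := by
  refine integral_congr_ae ?_
  filter_upwards [h] with t ht
  rw [ht]

theorem mulInner_zero_left (u : 𝕋 → ℂ) (b : L2) : mulInner u 0 b = 0 := by
  refine (integral_congr_ae ?_).trans (integral_zero _ _)
  filter_upwards [Lp.coeFn_zero ℂ 2 μ] with t ht
  rw [ht, Pi.zero_apply, mul_zero, map_zero, zero_mul]

theorem mulInner_zero_right (u : 𝕋 → ℂ) (a : L2) : mulInner u a 0 = 0 := by
  refine (integral_congr_ae ?_).trans (integral_zero _ _)
  filter_upwards [Lp.coeFn_zero ℂ 2 μ] with t ht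
  rw [ht, Pi.zero_apply, mul_zero]

theorem mulInner_V_V (u : 𝕋 → ℂ) (a b : L2) : mulInner u (V a) (V b) = mulInner u b a := by
  refine integral_congr_ae ?_
  filter_upwards [coeFn_V a, coeFn_V b] with t ha hb
  simp only [ha, hb, VF, Pi.star_apply, Pi.mul_apply, RCLike.star_def, map_mul,
    RCLike.conj_conj]
  linear_combination (conj (u t) * a t * conj (b t)) * e_mul_conj t

theorem mulInner_fourierLp {u : 𝕋 → ℂ} (hu : MemLp u 2 μ) (j k : ℤ) :
    mulInner u (fourierLp 2 j) (fourierLp 2 k) = ⟪hu.toLp u, (fourierLp 2 (k - j) : L2)⟫_ℂ := by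
  rw [L2.inner_def]
  refine integral_congr_ae ?_
  filter_upwards [hu.coeFn_toLp, coeFn_fourierLp 2 j, coeFn_fourierLp 2 k,
    coeFn_fourierLp 2 (k - j)] with t hu hj hk hkj
  rw [hu, hj, hk, hkj, RCLike.inner_apply', sub_eq_add_neg, fourier_add, fourier_neg, map_mul]
  ring

namespace IsGSIO

variable {R : L2 →L[ℂ] L2} {f g φ ψ : 𝕋 → ℂ}

theorem inner_apply (hR : IsGSIO R f g φ ψ) (x y : L2) :
    ⟪R x, y⟫_ℂ = mulInner f (Pplus x) (Pplus y) + mulInner g (Pplus x) (Pminus y) +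
      mulInner φ (Pminus x) (Pplus y) + mulInner ψ (Pminus x) (Pminus y) := by
  obtain ⟨h₁, h₂, h₃, h₄, hRx⟩ := hR x
  simp only [hRx, inner_add_left, inner_Pplus_left, inner_Pminus_left, inner_toLp_mul]

/-- Conjugating by `V` transposes the symbol matrix `(f, φ; g, ψ)` into `(ψ, φ; g, f)`. -/
theorem inner_V_apply_V (hR : IsGSIO R f g φ ψ) (x y : L2) :
    ⟪R (V x), V y⟫_ℂ = mulInner ψ (Pplus y) (Pplus x) + mulInner g (Pplus y) (Pminus x) +
      mulInner φ (Pminus y) (Pplus x) + mulInner f (Pminus y) (Pminus x) := by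
  simp only [hR.inner_apply, Pplus_V, Pminus_V, mulInner_V_V]
  ring

theorem inner_V_apply_V_eq (hR : IsGSIO R f g φ ψ) (hfψ : f =ᵐ[μ] ψ) (x y : L2) :
    ⟪R (V x), V y⟫_ℂ = ⟪R y, x⟫_ℂ := by
  simp only [hR.inner_V_apply_V, hR.inner_apply, mulInner_congr hfψ]

theorem ae_eq_of_inner_V_apply_V_eq (hR : IsGSIO R f g φ ψ) (hf : MemLp f 2 μ)
    (hψ : MemLp ψ 2 μ) (h : ∀ x y, ⟪R (V x), V y⟫_ℂ = ⟪R y, x⟫_ℂ) : f =ᵐ[μ] ψ := by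
  have hcoeff (n m : ℕ) : ⟪hψ.toLp ψ, (fourierLp 2 ((n : ℤ) - m) : L2)⟫_ℂ =
      ⟪hf.toLp f, (fourierLp 2 ((n : ℤ) - m) : L2)⟫_ℂ := by
    simpa only [hR.inner_V_apply_V, hR.inner_apply, Pplus_fourierLp_natCast,
      Pminus_fourierLp_natCast, mulInner_zero_left, mulInner_zero_right, add_zero,
      mulInner_fourierLp hf, mulInner_fourierLp hψ] using h (fourierLp 2 n) (fourierLp 2 m)
  refine (MemLp.toLp_eq_toLp_iff hf hψ).1 <| ext_fourierLp fun k => ?_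
  obtain ⟨n, m, rfl⟩ : ∃ n m : ℕ, (n : ℤ) - m = k := ⟨k.toNat, (-k).toNat, by omega⟩
  rw [← inner_conj_symm, ← hcoeff, inner_conj_symm]

end IsGSIO

theorem gsio_complexSymmetric_iff_general (f g φ ψ : 𝕋 → ℂ)
    (hf : MemLp f 2 μ) (hψ : MemLp ψ 2 μ)
    (R : L2 →L[ℂ] L2) (hR : IsGSIO R f g φ ψ) :
    (∀ x : L2, ∃ (h : MemLp (VF ⇑x) 2 μ)
        (h2 : MemLp (VF ⇑(R (h.toLp (VF ⇑x)))) 2 μ),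
        h2.toLp (VF ⇑(R (h.toLp (VF ⇑x)))) = ContinuousLinearMap.adjoint R x) ↔
      f =ᵐ[μ] ψ := by
  calc _ ↔ ∀ x, V (R (V x)) = R.adjoint x :=
        ⟨fun H x => (H x).2.2, fun H x => ⟨memLp_VF (Lp.memLp _), memLp_VF (Lp.memLp _), H x⟩⟩
    _ ↔ ∀ x y, ⟪R (V x), V y⟫_ℂ = ⟪R y, x⟫_ℂ := conj_comp_comp_conj_eq_adjoint_iff inner_V_comm R
    _ ↔ f =ᵐ[μ] ψ := ⟨hR.ae_eq_of_inner_V_apply_V_eq hf hψ, hR.inner_V_apply_V_eq⟩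

/-- If `R_H` is bounded with symbols in `L²(𝕋)` and `V` is the
conjugation `(Vx)(z) = z̄·conj(x(z))`, then `V R_H V = R_H*` iff `f = ψ`. -/
theorem gsio_complexSymmetric_iff (f g φ ψ : 𝕋 → ℂ)
    (hf : MemLp f 2 μ) (hg : MemLp g 2 μ) (hφ : MemLp φ 2 μ) (hψ : MemLp ψ 2 μ)
    (R : L2 →L[ℂ] L2) (hR : IsGSIO R f g φ ψ) :
    (∀ x : L2, ∃ (h : MemLp (VF ⇑x) 2 μ)
        (h2 : MemLp (VF ⇑(R (h.toLp (VF ⇑x)))) 2 μ),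
        h2.toLp (VF ⇑(R (h.toLp (VF ⇑x)))) = ContinuousLinearMap.adjoint R x) ↔
      f =ᵐ[μ] ψ :=
  gsio_complexSymmetric_iff_general f g φ ψ hf hψ R hR

end GSIO
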